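/- arXiv:1609.03981 — 10 statements merged into one kernel-verified Lean document; each statement's English description precedes it below -/
import Mathlib

section
/- For every integer i with 0 ≤ i ≤ n−1, all three formal partial derivatives ∂f_n/∂x, ∂f_n/∂y, ∂f_n/∂z vanish at the point (ζ^i, 1, ζ^{−i}); hence each P_i = (ζ^i : 1 : ζ^{−i}) is a singular point of the projective plane curve f_n = 0. -/
open MvPolynomial

/-- The singular plane curve polynomial
`f_n(x,y,z) = x^n + z^n + (n-2)y^n - n·x·z·y^{n-2}
  + Σ_{i=2}^{⌊n/2⌋} a_i ((xz)^i y^{n-2i} - i·x·z·y^{n-2} + (i-1)y^n)`,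
with variables `X 0 = x`, `X 1 = y`, `X 2 = z`. -/
noncomputable def fPoly (k : Type*) [CommRing k] (n : ℕ) (a : ℕ → k) :
    MvPolynomial (Fin 3) k :=
  X 0 ^ n + X 2 ^ n + C ((n : k) - 2) * X 1 ^ n - C (n : k) * X 0 * X 2 * X 1 ^ (n - 2)
    + ∑ i ∈ Finset.Icc 2 (n / 2), C (a i) *
        ((X 0 * X 2) ^ i * X 1 ^ (n - 2 * i) - C (i : k) * X 0 * X 2 * X 1 ^ (n - 2)
          + C ((i : k) - 1) * X 1 ^ n)


/-- For every integer i with 0 ≤ i ≤ n-1, all three formal partial derivatives of f_n vanish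
at (ζ^i, 1, ζ^{-i}); hence each P_i = (ζ^i : 1 : ζ^{-i}) is a singular point of the projective
plane curve f_n = 0. -/
theorem fPoly_nodes_are_singular {k : Type*} [Field k] [CharZero k] (n : ℕ) (hn : 4 ≤ n)
    (ζ : k) (hζ : IsPrimitiveRoot ζ n) (a : ℕ → k) (i : ℕ) (hi : i ≤ n - 1) :
    ∀ j : Fin 3, eval (![ζ ^ i, 1, ζ⁻¹ ^ i] : Fin 3 → k) (pderiv j (fPoly k n a)) = 0 := by
  have hz : ζ ^ i ≠ 0 := pow_ne_zero _ (hζ.ne_zero (by omega))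
  have h1 : ζ ^ i * (ζ ^ i)⁻¹ = 1 := mul_inv_cancel₀ hz
  have hp : (ζ ^ i) ^ n = 1 := by
    rw [← pow_mul, mul_comm, pow_mul, hζ.pow_eq_one, one_pow]
  have hnm : (ζ ^ i) ^ (n - 1) = (ζ ^ i)⁻¹ := by
    apply eq_inv_of_mul_eq_one_left
    rw [← pow_succ, Nat.sub_add_cancel (by omega)]; exact hp
  intro j
  fin_cases j <;>
    simp only [fPoly, pderiv_pow, pderiv_X_self, pderiv_X_of_ne, pderiv_mul, map_sum] <;>
    simp [pderiv_X_of_ne, hnm]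
  · rw [Finset.sum_eq_zero fun x hx => by rw [h1, one_pow]; ring]
    ring
  · rw [Finset.sum_eq_zero (fun x hx => by
        simp only [Finset.mem_Icc] at hx
        rw [h1, one_pow, Nat.cast_sub (by omega : 2 * x ≤ n),
          Nat.cast_sub (by omega : 2 ≤ n)]
        push_cast
        linear_combination (-(a x * (x : k) * ((n : k) - 2))) * h1),
      Nat.cast_sub (by omega : 2 ≤ n)]
    linear_combination (-(n : k) * ((n : k) - 2)) * h1
  · rw [Finset.sum_eq_zero fun x hx => by rw [h1, one_pow]; ring]
end

section
/- Let R = ℚ[a_2, …, a_{⌊n/2⌋}] be a polynomial ring in the indeterminates a_i and regard f_n as an element of R[x,y,z]. Then in R[s][x_1] one has the congruence f_n(1 + x_1, 1, 1 + s·x_1) ≡ (p_0 + p_1·s + p_0·s²)·x_1² (mod x_1³), where p_0 = (n(n−1) + Σ_{i=2}^{⌊n/2⌋} a_i·i·(i−1))/2 and p_1 = −n + Σ_{i=2}^{⌊n/2⌋} a_i·i·(i−1); moreover p_0 and p_1 are nonzero elements of R. (This is the local computation showing that the point P_0 = (1:1:1) has multiplicity two on the curve f_n = 0, with the tangent cone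 given by the binary quadratic p_0 + p_1 s + p_0 s².) -/
open MvPolynomial

lemma two_mul_choose_two' (m : ℕ) : 2 * m.choose 2 = m * (m - 1) := by
  rw [Nat.choose_two_right, Nat.mul_div_cancel']
  rcases m with _|k
  · simp
  · simpa [Nat.succ_sub_one, mul_comm] using (Nat.even_mul_succ_self k).two_dvd

lemma cast_two_mul_choose_two {A : Type*} [CommRing A] (x : A) (m : ℕ) :
    (2 : A) * ((m.choose 2 : ℕ) : A) = ((m * (m - 1) : ℕ) : A) := by
  calc (2 : A) * ((m.choose 2 : ℕ) : A) = ((2 * m.choose 2 : ℕ) : A) := by push_cast; ring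
  _ = ((m * (m - 1) : ℕ) : A) := by rw [two_mul_choose_two']

lemma one_add_pow_cube {A : Type*} [CommRing A] (u : A) (hu : u ^ 3 = 0) (m : ℕ) :
    (1 + u) ^ m = 1 + (m : A) * u + ((m.choose 2 : ℕ) : A) * u ^ 2 := by
  induction m with
  | zero => simp
  | succ m ih =>
    have h2 : (((m+1).choose 2 : ℕ) : A) = ((m.choose 2 : ℕ) : A) + (m : A) := by
      rw [Nat.choose_succ_succ, Nat.choose_one_right]; push_cast; ring
    rw [pow_succ, ih, h2]
    push_cast
    linear_combination ((m.choose 2 : ℕ) : A) * hu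

set_option maxHeartbeats 2000000 in
set_option synthInstance.maxHeartbeats 1000000 in
/-- Over R = ℚ[a_2, …] (realized inside the polynomial ring ℚ[a_0, a_1, a_2, …] with
a_i = X i), in R[s][x₁] one has
f_n(1 + x₁, 1, 1 + s·x₁) ≡ (p₀ + p₁·s + p₀·s²)·x₁² (mod x₁³), where
p₀ = (n(n-1) + Σ_{i=2}^{⌊n/2⌋} a_i·i·(i-1))/2 and p₁ = -n + Σ_{i=2}^{⌊n/2⌋} a_i·i·(i-1);
moreover p₀ ≠ 0 and p₁ ≠ 0.  (Here the outer polynomial variable is x₁ and the inner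
one is s, so R[s][x₁] = Polynomial (Polynomial R).) -/
theorem fPoly_node_tangent_cone (n : ℕ) (hn : 4 ≤ n)
    (p0 p1 : MvPolynomial ℕ ℚ)
    (hp0 : p0 = MvPolynomial.C (2⁻¹ : ℚ) *
      (MvPolynomial.C ((n * (n - 1) : ℕ) : ℚ)
        + ∑ i ∈ Finset.Icc 2 (n / 2),
            MvPolynomial.C (((i * (i - 1) : ℕ)) : ℚ) * MvPolynomial.X i))
    (hp1 : p1 = - MvPolynomial.C ((n : ℚ))
        + ∑ i ∈ Finset.Icc 2 (n / 2),
            MvPolynomial.C (((i * (i - 1) : ℕ)) : ℚ) * MvPolynomial.X i) :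
    ((Polynomial.X ^ 3 : Polynomial (Polynomial (MvPolynomial ℕ ℚ))) ∣
      (aeval
        (![1 + Polynomial.X, 1, 1 + Polynomial.C Polynomial.X * Polynomial.X] :
          Fin 3 → Polynomial (Polynomial (MvPolynomial ℕ ℚ)))
        (fPoly (MvPolynomial ℕ ℚ) n (fun i => MvPolynomial.X i))
        - Polynomial.C (Polynomial.C p0 + Polynomial.C p1 * Polynomial.X
            + Polynomial.C p0 * Polynomial.X ^ 2) * Polynomial.X ^ 2))
    ∧ p0 ≠ 0 ∧ p1 ≠ 0 := by
  have hnn : ((n * (n - 1) : ℕ) : ℚ) ≠ 0 := by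
    have : n * (n - 1) ≠ 0 := by
      have : 3 ≤ n - 1 := by omega
      positivity
    exact_mod_cast this
  refine ⟨?_, ?_, ?_⟩
  · -- divisibility
    rw [← Ideal.Quotient.eq_zero_iff_dvd]
    simp only [fPoly, map_add, map_sub, map_mul, map_pow, map_sum, aeval_X, aeval_C,
      Polynomial.algebraMap_apply, Algebra.algebraMap_self, RingHom.id_apply,
      Matrix.cons_val_zero, Matrix.cons_val_one, Matrix.head_cons, Matrix.cons_val_two,
      Matrix.tail_cons, map_one, map_natCast, map_neg, map_ofNat, one_pow, mul_one,
      hp0, hp1]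
    haveI : (Ideal.span {(Polynomial.X : Polynomial (Polynomial (MvPolynomial ℕ ℚ))) ^ 3}).IsTwoSided :=
      ⟨fun b ha ↦ mul_comm b _ ▸ Ideal.mul_mem_left _ b ha⟩
    letI := Ideal.Quotient.commRing
      (Ideal.span {(Polynomial.X : Polynomial (Polynomial (MvPolynomial ℕ ℚ))) ^ 3})
    set π := Ideal.Quotient.mk
      (Ideal.span {(Polynomial.X : Polynomial (Polynomial (MvPolynomial ℕ ℚ))) ^ 3}) with hπdef
    simp only [map_add π, map_sub π, map_mul π, map_pow π, map_sum π, map_one π, map_neg π,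
      map_natCast π, map_ofNat π]
    set ε := π Polynomial.X with hεdef
    set t := π (Polynomial.C Polynomial.X) with htdef
    set half := π (Polynomial.C (Polynomial.C (MvPolynomial.C (2⁻¹ : ℚ)))) with hhalfdef
    have hε : ε ^ 3 = 0 := by
      rw [hεdef, ← map_pow]
      exact Ideal.Quotient.eq_zero_iff_mem.mpr (Ideal.subset_span (Set.mem_singleton _))
    have key : (Polynomial.C (Polynomial.C (MvPolynomial.C (2 : ℚ)))
        : Polynomial (Polynomial (MvPolynomial ℕ ℚ))) = 2 := by
      rw [map_ofNat (MvPolynomial.C : ℚ →+* MvPolynomial ℕ ℚ),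
        map_ofNat (Polynomial.C : MvPolynomial ℕ ℚ →+* Polynomial (MvPolynomial ℕ ℚ)),
        map_ofNat (Polynomial.C : Polynomial (MvPolynomial ℕ ℚ)
          →+* Polynomial (Polynomial (MvPolynomial ℕ ℚ)))]
    have e2 : (Polynomial.C (Polynomial.C (MvPolynomial.C (2 : ℚ)))
          : Polynomial (Polynomial (MvPolynomial ℕ ℚ)))
        * Polynomial.C (Polynomial.C (MvPolynomial.C (2⁻¹ : ℚ))) = 1 := by
      rw [← Polynomial.C_mul, ← Polynomial.C_mul, ← MvPolynomial.C_mul]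
      norm_num
    have h2 : 2 * half = 1 := by
      rw [hhalfdef, ← map_ofNat π 2, ← key, ← map_mul π, e2, map_one]
    have hsum : (∑ x ∈ Finset.Icc 2 (n / 2),
          π (Polynomial.C (Polynomial.C (MvPolynomial.X x))) *
            (((1 + ε) * (1 + t * ε)) ^ x - (x : _) * (1 + ε) * (1 + t * ε) + ((x : _) - 1)))
        = (∑ x ∈ Finset.Icc 2 (n / 2),
            ((x * (x - 1) : ℕ) : _) * π (Polynomial.C (Polynomial.C (MvPolynomial.X x))))
          * (half * (1 + t) ^ 2 * ε ^ 2) := by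
      rw [Finset.sum_mul]
      refine Finset.sum_congr rfl fun i hi => ?_
      have hu : ((1 + ε) * (1 + t * ε) - 1) ^ 3 = 0 := by
        have h : ((1 + ε) * (1 + t * ε) - 1) ^ 3 = (1 + t + t * ε) ^ 3 * ε ^ 3 := by ring
        rw [h, hε, mul_zero]
      have hv := one_add_pow_cube _ hu i
      rw [add_comm (1 : _) ((1 + ε) * (1 + t * ε) - 1), sub_add_cancel] at hv
      rw [hv]
      have hchi := cast_two_mul_choose_two ε i
      linear_combination (π (Polynomial.C (Polynomial.C (MvPolynomial.X i)))
            * ((i.choose 2 : ℕ) : _) * (2 * t * (1 + t) + t ^ 2 * ε)) * hε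
        + (π (Polynomial.C (Polynomial.C (MvPolynomial.X i))) * (1 + t) ^ 2 * ε ^ 2 * half) * hchi
        - (π (Polynomial.C (Polynomial.C (MvPolynomial.X i))) * (1 + t) ^ 2 * ε ^ 2
            * ((i.choose 2 : ℕ) : _)) * h2
    rw [hsum]
    have htε : (t * ε) ^ 3 = 0 := by rw [mul_pow, hε, mul_zero]
    rw [one_add_pow_cube ε hε n, one_add_pow_cube (t * ε) htε n]
    have hchn := cast_two_mul_choose_two ε n
    linear_combination ((1 + t ^ 2) * ε ^ 2 * half) * hchn
      + ((∑ x ∈ Finset.Icc 2 (n / 2),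
            ((x * (x - 1) : ℕ) : _) * π (Polynomial.C (Polynomial.C (MvPolynomial.X x))))
          * t * ε ^ 2 - (1 + t ^ 2) * ε ^ 2 * ((n.choose 2 : ℕ) : _)) * h2
  · -- p0 ≠ 0
    intro h0
    have hc : MvPolynomial.constantCoeff p0 = 2⁻¹ * ((n * (n - 1) : ℕ) : ℚ) := by
      simp [hp0]
    rw [h0, map_zero] at hc
    exact hnn (by linarith [hc.symm] )
  · -- p1 ≠ 0
    intro h0
    have hc : MvPolynomial.constantCoeff p1 = -(n : ℚ) := by
      simp [hp1]
    rw [h0, map_zero] at hc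
    have : (n : ℚ) = 0 := by linarith [hc.symm]
    have : n = 0 := by exact_mod_cast this
    omega
end

section
/- In the polynomial ring k[x,z] one has the identity x^n · f_n(x, 1, z) = (x^n)² + ((n−2) − n·(xz) + Σ_{i=2}^{⌊n/2⌋} a_i·((xz)^i − i·(xz) + i − 1))·x^n + (xz)^n. Consequently, on the affine curve f_n(x,1,z) = 0 the functions s = x^n and t = x·z satisfy the equation s² + s·(n − 2 − n·t + Σ_{i=2}^{⌊n/2⌋} a_i·(t^i − i·t + i − 1)) + t^n = 0, which is the affine model of the quotient curve X_n^0 = C_n^0/⟨α⟩. -/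
open MvPolynomial

/-- In k[x,z] one has
x^n · f_n(x,1,z) = (x^n)² + ((n-2) - n·(xz) + Σ a_i ((xz)^i - i(xz) + i - 1))·x^n + (xz)^n;
consequently, on the affine curve f_n(x,1,z) = 0 the functions s = x^n and t = xz satisfy
s² + s·(n - 2 - n t + Σ a_i (t^i - i t + i - 1)) + t^n = 0, the affine model of
X_n⁰ = C_n⁰/⟨α⟩. -/
theorem fPoly_alpha_quotient_model {k : Type*} [Field k] [CharZero k] (n : ℕ) (hn : 4 ≤ n)
    (ζ : k) (hζ : IsPrimitiveRoot ζ n) (a : ℕ → k) :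
    ((X 0 : MvPolynomial (Fin 2) k) ^ n *
        aeval (![X 0, 1, X 1] : Fin 3 → MvPolynomial (Fin 2) k) (fPoly k n a)
      = ((X 0 : MvPolynomial (Fin 2) k) ^ n) ^ 2
        + (C ((n : k) - 2) - C (n : k) * (X 0 * X 1)
            + ∑ i ∈ Finset.Icc 2 (n / 2), C (a i) *
                (((X 0 : MvPolynomial (Fin 2) k) * X 1) ^ i
                  - C (i : k) * (X 0 * X 1) + C ((i : k) - 1))) * X 0 ^ n
        + ((X 0 : MvPolynomial (Fin 2) k) * X 1) ^ n)
    ∧ ∀ x z : k, eval (![x, 1, z] : Fin 3 → k) (fPoly k n a) = 0 →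
        (x ^ n) ^ 2
          + (x ^ n) * ((n : k) - 2 - (n : k) * (x * z)
              + ∑ i ∈ Finset.Icc 2 (n / 2), a i * ((x * z) ^ i - (i : k) * (x * z) + ((i : k) - 1)))
          + (x * z) ^ n = 0 := by
  constructor
  · simp only [fPoly, map_add, map_sub, map_mul, map_pow, map_sum, aeval_C, aeval_X,
      algebraMap_eq, Matrix.cons_val_zero, Matrix.cons_val_one, Matrix.head_cons,
      Matrix.cons_val_two, Matrix.tail_cons, one_pow, mul_one]
    rw [show (∑ i ∈ Finset.Icc 2 (n / 2), C (a i) *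
        ((X 0 * X 1 : MvPolynomial (Fin 2) k) ^ i - C (i : k) * X 0 * X 1 + (C (i : k) - C 1)))
        = ∑ i ∈ Finset.Icc 2 (n / 2), C (a i) *
        ((X 0 * X 1 : MvPolynomial (Fin 2) k) ^ i - C (i : k) * (X 0 * X 1) + (C (i : k) - C 1))
        from Finset.sum_congr rfl fun i _ => by ring]
    ring
  · intro x z h
    have key : x ^ n + z ^ n + ((n : k) - 2) - (n : k) * x * z
        + ∑ i ∈ Finset.Icc 2 (n / 2), a i * ((x * z) ^ i - (i : k) * (x * z) + ((i : k) - 1))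
        = 0 := by
      rw [← h]
      simp only [fPoly, map_add, map_sub, map_mul, map_pow, map_sum, eval_C, eval_X,
        Matrix.cons_val_zero, Matrix.cons_val_one, Matrix.head_cons, Matrix.cons_val_two,
        Matrix.tail_cons, one_pow, mul_one]
      congr 1
      exact Finset.sum_congr rfl fun i _ => by ring
    linear_combination x ^ n * key
end

section
/- Let n = 2^k·m with k ≥ 1 and m odd, and let K be a field containing a primitive 2^k-th root of unity ξ. Then there exists a polynomial Q_n ∈ K[X,Y] such that Q_n(x + ξ^{−1}·z, x·z) = x^n + z^n as an identity in K[x,z]. -/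
open MvPolynomial

lemma twisted_newton_aux {K : Type*} [Field K] (c : K) (n : ℕ) :
    ∃ Q : MvPolynomial (Fin 2) K,
      aeval (![X 0 + C c * X 1, X 0 * X 1] : Fin 2 → MvPolynomial (Fin 2) K) Q
        = (X 0 ^ n + (C c * X 1) ^ n : MvPolynomial (Fin 2) K) := by
  induction n using Nat.twoStepInduction with
  | zero => exact ⟨C 2, by simp [map_ofNat]; ring⟩
  | one => exact ⟨X 0, by simp⟩
  | more n ih1 ih2 =>
    obtain ⟨Q1, hQ1⟩ := ih1
    obtain ⟨Q2, hQ2⟩ := ih2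
    refine ⟨X 0 * Q2 - C c * X 1 * Q1, ?_⟩
    simp only [map_sub, map_mul, aeval_X, hQ1, hQ2, aeval_C]
    show (![X 0 + C c * X 1, X 0 * X 1] : Fin 2 → MvPolynomial (Fin 2) K) 0 * _ -
      C c * (![X 0 + C c * X 1, X 0 * X 1] : Fin 2 → MvPolynomial (Fin 2) K) 1 * _ = _
    simp only [Matrix.cons_val_zero, Matrix.cons_val_one, Matrix.head_cons]
    ring

/-- Let n = 2^j·m with j ≥ 1 and m odd, and K a field containing a primitive 2^j-th root
of unity ξ. Then there is a polynomial Q_n ∈ K[X,Y] with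
Q_n(x + ξ⁻¹·z, x·z) = x^n + z^n as an identity in K[x,z]. -/
theorem exists_twisted_newton_poly {K : Type*} [Field K] (j m n : ℕ) (hj : 1 ≤ j)
    (hm : Odd m) (hn : n = 2 ^ j * m) (ξ : K) (hξ : IsPrimitiveRoot ξ (2 ^ j)) :
    ∃ Q : MvPolynomial (Fin 2) K,
      aeval (![X 0 + C ξ⁻¹ * X 1, X 0 * X 1] : Fin 2 → MvPolynomial (Fin 2) K) Q
        = (X 0 ^ n + X 1 ^ n : MvPolynomial (Fin 2) K) := by
  obtain ⟨Q, hQ⟩ := twisted_newton_aux (K := K) ξ⁻¹ n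
  refine ⟨Q, ?_⟩
  have hξn : ξ ^ n = 1 := by
    rw [hn, pow_mul, hξ.pow_eq_one, one_pow]
  have hξ0 : ξ ≠ 0 := hξ.ne_zero (by positivity)
  have hinv : (ξ⁻¹ : K) ^ n = 1 := by
    rw [inv_pow, hξn, inv_one]
  rw [hQ, mul_pow, ← C_pow, hinv, C_1, one_mul]
end

section
/- Suppose n ≥ 5 is odd. Then there exists a polynomial h ∈ k[x] of degree exactly n−2 such that f_n(x, 1, x) = (x−1)²·h(x) in k[x]. (This is the factorization used to count the fixed points of the involution β : (x:y:z) ↦ (z:y:x) on the curve f_n = 0 when n is odd.) -/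
open MvPolynomial

/-- Key algebraic identity: `(t-1)^2 ∣ t^m - 1 - m(t-1)` in any commutative ring. -/
lemma key_dvd {R : Type*} [CommRing R] (t : R) (m : ℕ) :
    (t - 1) ^ 2 ∣ t ^ m - 1 - (m : R) * (t - 1) := by
  induction m with
  | zero => simp
  | succ m ih =>
    have hrw : t ^ (m + 1) - 1 - ((m + 1 : ℕ) : R) * (t - 1)
        = t * (t ^ m - 1 - (m : R) * (t - 1)) + (m : R) * (t - 1) ^ 2 := by
      push_cast; ring
    rw [hrw]
    exact dvd_add (Dvd.dvd.mul_left ih t) (Dvd.dvd.mul_left dvd_rfl _)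

/-- For odd n ≥ 5 there is a polynomial h ∈ k[x] of degree exactly n-2 with
f_n(x, 1, x) = (x-1)²·h(x) in k[x]. -/
theorem fPoly_beta_fixed_locus_odd {k : Type*} [Field k] [CharZero k] (n : ℕ) (hn : 5 ≤ n)
    (hodd : Odd n) (ζ : k) (hζ : IsPrimitiveRoot ζ n) (a : ℕ → k) :
    ∃ h : Polynomial k, h.degree = (n - 2 : ℕ) ∧
      aeval (![Polynomial.X, 1, Polynomial.X] : Fin 3 → Polynomial k) (fPoly k n a)
        = (Polynomial.X - 1) ^ 2 * h := by
  classical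
  set F : Polynomial k :=
    aeval (![Polynomial.X, 1, Polynomial.X] : Fin 3 → Polynomial k) (fPoly k n a) with hF
  -- explicit form of F
  have hFeq : F =
      Polynomial.C (2 : k) * (Polynomial.X ^ n - 1 - Polynomial.C (n : k) * (Polynomial.X - 1))
        - Polynomial.C (n : k) * (Polynomial.X ^ 2 - 1 - Polynomial.C (2 : k) * (Polynomial.X - 1))
        + ∑ i ∈ Finset.Icc 2 (n / 2), Polynomial.C (a i) *
            (Polynomial.X ^ (2 * i) - 1 - Polynomial.C (i : k) * (Polynomial.X ^ 2 - 1)) := by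
    rw [hF]
    simp only [fPoly, map_add, map_sub, map_mul, map_pow, map_sum, aeval_X, aeval_C,
      Matrix.cons_val_zero, Matrix.cons_val_one, Matrix.head_cons, Matrix.cons_val_two,
      Matrix.tail_cons, one_pow, mul_one, algebraMap_eq]
    simp only [Polynomial.algebraMap_eq]
    congr 1
    · push_cast [Polynomial.C_1, map_ofNat]
      ring
    · refine Finset.sum_congr rfl fun i _ => ?_
      push_cast [Polynomial.C_1, map_ofNat]
      ring
  -- divisibility
  have hdvd : (Polynomial.X - 1 : Polynomial k) ^ 2 ∣ F := by
    rw [hFeq]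
    refine dvd_add (dvd_sub (Dvd.dvd.mul_left ?_ _) (Dvd.dvd.mul_left ?_ _))
      (Finset.dvd_sum fun i _ => Dvd.dvd.mul_left ?_ _)
    · exact key_dvd Polynomial.X n
    · have := key_dvd (Polynomial.X : Polynomial k) 2
      rw [← Polynomial.C_eq_natCast] at this
      simpa using this
    · have h1 : ((Polynomial.X : Polynomial k) ^ 2 - 1) ^ 2 ∣
          (Polynomial.X ^ 2) ^ i - 1 - Polynomial.C (i : k) * (Polynomial.X ^ 2 - 1) := by
        simpa using key_dvd (Polynomial.X ^ 2 : Polynomial k) i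
      have h2 : (Polynomial.X - 1 : Polynomial k) ^ 2 ∣ (Polynomial.X ^ 2 - 1) ^ 2 :=
        pow_dvd_pow_of_dvd ⟨Polynomial.X + 1, by ring⟩ 2
      rw [← pow_mul] at h1
      exact h2.trans h1
  -- degree of F is n
  have h2n : ((2 : k)) ≠ 0 := two_ne_zero
  have hdegF : F.degree = (n : ℕ) := by
    have hGform : F = Polynomial.C (2 : k) * Polynomial.X ^ n +
        (Polynomial.C (2 : k) * (- 1 - Polynomial.C (n : k) * (Polynomial.X - 1))
          - Polynomial.C (n : k) * (Polynomial.X ^ 2 - 1 - Polynomial.C (2 : k) * (Polynomial.X - 1))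
          + ∑ i ∈ Finset.Icc 2 (n / 2), Polynomial.C (a i) *
              (Polynomial.X ^ (2 * i) - 1 - Polynomial.C (i : k) * (Polynomial.X ^ 2 - 1))) := by
      rw [hFeq]; ring
    rw [hGform, add_comm, Polynomial.degree_add_eq_right_of_degree_lt, Polynomial.degree_C_mul_X_pow n h2n]
    rw [Polynomial.degree_C_mul_X_pow n h2n]
    have hlt : ((n - 1 : ℕ) : WithBot ℕ) < (n : WithBot ℕ) := by
      exact_mod_cast Nat.sub_lt (by omega) one_pos
    refine lt_of_le_of_lt ?_ hlt
    refine le_trans (Polynomial.degree_add_le _ _) (max_le (le_trans (Polynomial.degree_sub_le _ _) (max_le ?_ ?_)) ?_)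
    · refine le_trans (Polynomial.degree_mul_le _ _) ?_
      have : (Polynomial.C (2:k)).degree ≤ 0 := Polynomial.degree_C_le
      have h2 : (- 1 - Polynomial.C (n : k) * (Polynomial.X - 1) : Polynomial k).degree ≤ 1 := by
        compute_degree
      calc (Polynomial.C (2:k)).degree + _ ≤ 0 + 1 := add_le_add this h2
        _ ≤ ((n-1:ℕ) : WithBot ℕ) := by
          have : ((1:ℕ) : WithBot ℕ) ≤ ((n-1:ℕ) : WithBot ℕ) := by
            exact_mod_cast (by omega : (1:ℕ) ≤ n-1)
          simpa using this
    · refine le_trans (Polynomial.degree_mul_le _ _) ?_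
      have : (Polynomial.C ((n:k))).degree ≤ 0 := Polynomial.degree_C_le
      have h2 : (Polynomial.X ^ 2 - 1 - Polynomial.C (2 : k) * (Polynomial.X - 1) : Polynomial k).degree ≤ 2 := by
        compute_degree
      calc _ ≤ (0 : WithBot ℕ) + 2 := add_le_add this h2
        _ ≤ ((n-1:ℕ) : WithBot ℕ) := by
          have : (((2:ℕ)) : WithBot ℕ) ≤ ((n-1:ℕ) : WithBot ℕ) := by
            exact_mod_cast (by omega : (2:ℕ) ≤ n-1)
          simpa using this
    · refine le_trans (Polynomial.degree_sum_le _ _) (Finset.sup_le fun i hi => ?_)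
      have hodd' : n % 2 = 1 := Nat.odd_iff.mp hodd
      have hi2 : 2 * i ≤ n - 1 := by
        simp only [Finset.mem_Icc] at hi; omega
      have : (Polynomial.C (a i) *
          (Polynomial.X ^ (2 * i) - 1 - Polynomial.C (i : k) * (Polynomial.X ^ 2 - 1))).degree
          ≤ ((n - 1 : ℕ) : WithBot ℕ) := by
        compute_degree
        refine max_le ?_ ?_
        · have : ((2*i : ℕ) : WithBot ℕ) ≤ ((n-1:ℕ) : WithBot ℕ) := by
            exact_mod_cast hi2
          push_cast at this; exact this
        · have : ((2 : ℕ) : WithBot ℕ) ≤ ((n-1:ℕ) : WithBot ℕ) := by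
            exact_mod_cast (by omega : (2:ℕ) ≤ n - 1)
          simpa using this
      exact this
  -- conclude
  obtain ⟨h, hh⟩ := hdvd
  refine ⟨h, ?_, hh⟩
  have hh0 : h ≠ 0 := by
    rintro rfl
    rw [mul_zero] at hh
    rw [hh] at hdegF
    simp at hdegF
  have hdm : ((Polynomial.X - 1 : Polynomial k) ^ 2).degree = 2 := by
    have : (Polynomial.X - 1 : Polynomial k) = Polynomial.X - Polynomial.C 1 := by simp
    rw [Polynomial.degree_pow, this, Polynomial.degree_X_sub_C]
    rfl
  rw [hh, Polynomial.degree_mul, hdm] at hdegF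
  have hd : h.degree = (h.natDegree : WithBot ℕ) := Polynomial.degree_eq_natDegree hh0
  rw [hd] at hdegF ⊢
  have : (n : WithBot ℕ) = ((2 + h.natDegree : ℕ) : WithBot ℕ) := by
    rw [hdegF.symm]; push_cast; rfl
  have hn2 : n = 2 + h.natDegree := by exact_mod_cast this
  have : n - 2 = h.natDegree := by omega
  rw [← this]
end

section
/- Suppose n ≥ 4 is even. Then (x²−1)² divides f_n(x, 1, x) in k[x], and the quotient h_1(x) = f_n(x,1,x)/(x²−1)² has degree at most n−4. (This is the factorization used to count the fixed points of the involution β : (x:y:z) ↦ (z:y:x) on the curve f_n = 0 when n is even.) -/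
open MvPolynomial

/-- Auxiliary quotient polynomial. -/
noncomputable def qAux (k : Type*) [CommRing k] (m : ℕ) : Polynomial k :=
  ∑ i ∈ Finset.range m, ∑ j ∈ Finset.range i, ((Polynomial.X : Polynomial k) ^ 2) ^ j

lemma qAux_key (k : Type*) [CommRing k] (m : ℕ) :
    ((Polynomial.X : Polynomial k) ^ 2 - 1) ^ 2 * qAux k m
      = Polynomial.X ^ (2 * m) - Polynomial.C (m : k) * Polynomial.X ^ 2
        + Polynomial.C ((m : k) - 1) := by
  have g : ∀ N : ℕ, ((Polynomial.X : Polynomial k) ^ 2 - 1)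
        * ∑ j ∈ Finset.range N, ((Polynomial.X : Polynomial k) ^ 2) ^ j
      = ((Polynomial.X : Polynomial k) ^ 2) ^ N - 1 := fun N => by
    rw [mul_comm]; exact geom_sum_mul _ N
  have h1 : ((Polynomial.X : Polynomial k) ^ 2 - 1) ^ 2 * qAux k m
      = ((Polynomial.X : Polynomial k) ^ 2 - 1) * ∑ i ∈ Finset.range m,
          (((Polynomial.X : Polynomial k) ^ 2 - 1)
            * ∑ j ∈ Finset.range i, ((Polynomial.X : Polynomial k) ^ 2) ^ j) := by
    simp only [qAux, sq, Finset.mul_sum, mul_assoc]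
  rw [h1]
  simp_rw [g]
  rw [Finset.sum_sub_distrib, Finset.sum_const, Finset.card_range, mul_sub, g]
  simp only [nsmul_eq_mul, mul_one]
  rw [← pow_mul, ← Polynomial.C_eq_natCast, Polynomial.C_sub, Polynomial.C_1]
  ring

lemma qAux_degree (k : Type*) [CommRing k] (m : ℕ) :
    (qAux k m).degree ≤ ((2 * m - 4 : ℕ) : WithBot ℕ) := by
  refine (Polynomial.degree_sum_le _ _).trans (Finset.sup_le fun i hi => ?_)
  refine (Polynomial.degree_sum_le _ _).trans (Finset.sup_le fun j hj => ?_)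
  rw [← pow_mul]
  refine (Polynomial.degree_X_pow_le _).trans ?_
  have : 2 * j ≤ 2 * m - 4 := by
    simp only [Finset.mem_range] at hi hj; omega
  exact_mod_cast this

/-- For even n ≥ 4, (x²-1)² divides f_n(x, 1, x) in k[x] and the quotient h₁ has degree
at most n-4. -/
theorem fPoly_beta_fixed_locus_even {k : Type*} [Field k] [CharZero k] (n : ℕ) (hn : 4 ≤ n)
    (heven : Even n) (ζ : k) (hζ : IsPrimitiveRoot ζ n) (a : ℕ → k) :
    ∃ h1 : Polynomial k,
      aeval (![Polynomial.X, 1, Polynomial.X] : Fin 3 → Polynomial k) (fPoly k n a)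
        = (Polynomial.X ^ 2 - 1) ^ 2 * h1 ∧ h1.degree ≤ (n - 4 : ℕ) := by
  obtain ⟨m, rfl⟩ := heven
  have hdiv : (m + m) / 2 = m := by omega
  refine ⟨Polynomial.C 2 * qAux k m
      + ∑ i ∈ Finset.Icc 2 m, Polynomial.C (a i) * qAux k i, ?_, ?_⟩
  · have R : (Polynomial.X ^ 2 - 1) ^ 2 * (Polynomial.C (2:k) * qAux k m
        + ∑ i ∈ Finset.Icc 2 m, Polynomial.C (a i) * qAux k i)
        = Polynomial.C (2:k) * (Polynomial.X ^ (2*m) - Polynomial.C (m:k) * Polynomial.X ^ 2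
            + Polynomial.C ((m:k) - 1))
          + ∑ i ∈ Finset.Icc 2 m, Polynomial.C (a i) *
              (Polynomial.X ^ (2*i) - Polynomial.C (i:k) * Polynomial.X ^ 2
                + Polynomial.C ((i:k) - 1)) := by
      rw [mul_add, Finset.mul_sum]
      congr 1
      · rw [mul_left_comm, qAux_key]
      · exact Finset.sum_congr rfl fun i _ => by rw [mul_left_comm, qAux_key]
    rw [R]
    simp only [fPoly, map_add, map_sub, map_sum, map_mul, map_pow, aeval_X, aeval_C,
      Matrix.cons_val_zero, Matrix.cons_val_one, Matrix.head_cons, Matrix.cons_val_two,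
      Matrix.tail_cons, one_pow, mul_one, Polynomial.algebraMap_eq, hdiv]
    have S : ∀ i : ℕ, Polynomial.C (a i) * ((Polynomial.X * Polynomial.X) ^ i
        - Polynomial.C ((i:k)) * Polynomial.X * Polynomial.X
        + (Polynomial.C ((i:k)) - Polynomial.C (1:k)))
        = Polynomial.C (a i) * (Polynomial.X ^ (2*i) - Polynomial.C (i:k) * Polynomial.X ^ 2
            + (Polynomial.C (i:k) - Polynomial.C (1:k))) := fun i => by
      rw [pow_mul]; ring
    simp_rw [S]
    simp only [Polynomial.C_eq_natCast, map_ofNat, Polynomial.C_1]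
    push_cast
    ring
  · refine (Polynomial.degree_add_le _ _).trans (max_le ?_ ?_)
    · refine (Polynomial.degree_mul_le _ _).trans ?_
      have h2 : (2 * m - 4 : ℕ) = (m + m - 4 : ℕ) := by omega
      calc (Polynomial.C (2:k)).degree + (qAux k m).degree
          ≤ 0 + ((2 * m - 4 : ℕ) : WithBot ℕ) :=
            add_le_add Polynomial.degree_C_le (qAux_degree k m)
        _ = ((m + m - 4 : ℕ) : WithBot ℕ) := by rw [zero_add, h2]
    · refine (Polynomial.degree_sum_le _ _).trans (Finset.sup_le fun i hi => ?_)
      refine (Polynomial.degree_mul_le _ _).trans ?_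
      have hi' : 2 * i - 4 ≤ m + m - 4 := by
        simp only [Finset.mem_Icc] at hi; omega
      calc (Polynomial.C (a i)).degree + (qAux k i).degree
          ≤ 0 + ((2 * i - 4 : ℕ) : WithBot ℕ) :=
            add_le_add Polynomial.degree_C_le (qAux_degree k i)
        _ = ((2 * i - 4 : ℕ) : WithBot ℕ) := zero_add _
        _ ≤ ((m + m - 4 : ℕ) : WithBot ℕ) := by exact_mod_cast hi'
end

section
/- Let F(x,y,z) = x^n + z^n + (n−2)·y^n − n·x·z·y^{n−2} (the polynomial f_n with all parameters a_i = 0). If (x_0, y_0, z_0) ∈ k³ ∖ {(0,0,0)} satisfies F(x_0,y_0,z_0) = 0 and all three partial derivatives ∂F/∂x, ∂F/∂y, ∂F/∂z vanish at (x_0,y_0,z_0), then there exist λ ∈ k^× and an integer i with 0 ≤ i ≤ n−1 such that (x_0, y_0, z_0) = (λ·ζ^i, λ, λ·ζ^{−i}). In other words, the only singular points of the projective plane curve F = 0 with coordinates in k are the n nodes P_i = (ζ^i : 1 : ζ^{−i}). -/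
open MvPolynomial

/-- Let F(x,y,z) = x^n + z^n + (n-2)y^n - n·x·z·y^{n-2} (the polynomial f_n with all
parameters a_i = 0). If (x₀, y₀, z₀) ∈ k³ \\ {0} satisfies F = 0 and all three formal
partial derivatives of F vanish at (x₀,y₀,z₀), then (x₀,y₀,z₀) = (λζ^i, λ, λζ^{-i})
for some λ ∈ kˣ and 0 ≤ i ≤ n-1: the only k-rational singular points of the projective
curve F = 0 are the n nodes P_i = (ζ^i : 1 : ζ^{-i}). -/
theorem singular_points_of_special_member {k : Type*} [Field k] [CharZero k]
    (n : ℕ) (hn : 4 ≤ n) (ζ : k) (hζ : IsPrimitiveRoot ζ n)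
    (v : Fin 3 → k) (hv : v ≠ 0)
    (hF : eval v (X 0 ^ n + X 2 ^ n + C ((n : k) - 2) * X 1 ^ n
      - C (n : k) * X 0 * X 2 * X 1 ^ (n - 2) : MvPolynomial (Fin 3) k) = 0)
    (hsing : ∀ j : Fin 3, eval v (pderiv j
      (X 0 ^ n + X 2 ^ n + C ((n : k) - 2) * X 1 ^ n
        - C (n : k) * X 0 * X 2 * X 1 ^ (n - 2) : MvPolynomial (Fin 3) k)) = 0) :
    ∃ lam : k, lam ≠ 0 ∧ ∃ i : ℕ, i ≤ n - 1 ∧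
      v 0 = lam * ζ ^ i ∧ v 1 = lam ∧ v 2 = lam * ζ⁻¹ ^ i := by
  have h0 := hsing 0
  have h1 := hsing 1
  have h2 := hsing 2
  simp [pderiv_X, Pi.single_apply] at h0 h1 h2
  set a := v 0 with ha
  set b := v 1 with hb
  set c := v 2 with hc
  have hnk : (n : k) ≠ 0 := Nat.cast_ne_zero.mpr (by omega)
  have hn2k : (n : k) - 2 ≠ 0 := by
    have : ((n - 2 : ℕ) : k) ≠ 0 := Nat.cast_ne_zero.mpr (by omega)
    rwa [Nat.cast_sub (by omega)] at this
  have e0 : a ^ (n - 1) = b ^ (n - 2) * c := by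
    have key : (n : k) * (a ^ (n - 1) - b ^ (n - 2) * c) = 0 := by linear_combination h0
    have := (mul_eq_zero.mp key).resolve_left hnk
    exact sub_eq_zero.mp this
  have e2 : c ^ (n - 1) = b ^ (n - 2) * a := by
    have key : (n : k) * (c ^ (n - 1) - b ^ (n - 2) * a) = 0 := by linear_combination h2
    have := (mul_eq_zero.mp key).resolve_left hnk
    exact sub_eq_zero.mp this
  by_cases hb0 : b = 0
  · exfalso
    have hbp : b ^ (n - 2) = 0 := by rw [hb0]; exact zero_pow (by omega)
    have ha0 : a = 0 := by
      have h := e0; rw [hbp, zero_mul] at h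
      exact pow_eq_zero_iff (by omega : n - 1 ≠ 0) |>.mp h
    have hc0 : c = 0 := by
      have h := e2; rw [hbp, zero_mul] at h
      exact pow_eq_zero_iff (by omega : n - 1 ≠ 0) |>.mp h
    apply hv
    funext j
    fin_cases j <;> simpa using (by assumption : _)
  · have hcast : ((n - 2 : ℕ) : k) = (n : k) - 2 := by
      rw [Nat.cast_sub (by omega)]; norm_num
    have e1 : b ^ 2 = a * c := by
      have hpow2 : b ^ (n - 2 - 1) = b ^ (n - 3) := by rw [Nat.sub_sub]
      have hpow : b ^ (n - 1) = b ^ (n - 3) * b ^ 2 := by rw [← pow_add]; congr 1; omega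
      rw [hcast, hpow2, hpow] at h1
      have key : ((n : k) * ((n : k) - 2) * b ^ (n - 3)) * (b ^ 2 - a * c) = 0 := by
        linear_combination h1
      have := (mul_eq_zero.mp key).resolve_left
        (mul_ne_zero (mul_ne_zero hnk hn2k) (pow_ne_zero _ hb0))
      exact sub_eq_zero.mp this
    have ha0 : a ≠ 0 := by
      intro h
      apply hb0
      have : b ^ 2 = 0 := by rw [e1, h, zero_mul]
      exact pow_eq_zero_iff two_ne_zero |>.mp this
    have ean : a ^ n = b ^ n := by
      have h1' : a ^ n = a * a ^ (n - 1) := by rw [← pow_succ']; congr 1; omega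
      have h2' : b ^ n = b ^ (n - 2) * b ^ 2 := by rw [← pow_add]; congr 1; omega
      rw [h1', e0, h2', e1]; ring
    have hun : (a / b) ^ n = 1 := by
      rw [div_pow, ean, div_self (pow_ne_zero _ hb0)]
    haveI : NeZero n := ⟨by omega⟩
    obtain ⟨i, hi, hzi⟩ := hζ.eq_pow_of_pow_eq_one hun
    have hζ0 : ζ ≠ 0 := hζ.ne_zero (by omega)
    have hac : a = b * ζ ^ i := by
      field_simp at hzi
      linear_combination - hzi
    refine ⟨b, hb0, i, by omega, hac, rfl, ?_⟩
    have hz1 : ζ ^ i * ζ⁻¹ ^ i = 1 := by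
      rw [← mul_pow, mul_inv_cancel₀ hζ0, one_pow]
    have hbc : a * (b * ζ⁻¹ ^ i) = b ^ 2 := by
      rw [hac]; linear_combination (b ^ 2) * hz1
    exact mul_left_cancel₀ ha0 (e1.symm.trans hbc.symm)
end

section
/- For n = 5 and any parameter a ∈ k, set A(t) = a·(t−1)² − 5·t + 3 ∈ k[t] and f⁰_5(t) = −t³ + (1/4)·(a²−8)·t² − (1/2)·(a²+5a+6)·t + (1/4)·(a+3)². Then A(t)²/4 − t⁵ = (t−1)²·f⁰_5(t) in k[t]. (Thus the quotient curve C_5/⟨α⟩ has the affine hyperelliptic model u² = f⁰_5(t).) -/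
open Polynomial

/-- For n = 5: with A(t) = a(t-1)² - 5t + 3 and
f⁰₅(t) = -t³ + (1/4)(a²-8)t² - (1/2)(a²+5a+6)t + (1/4)(a+3)², one has
A(t)²/4 - t⁵ = (t-1)²·f⁰₅(t) in k[t]; thus C₅/⟨α⟩ has affine model u² = f⁰₅(t). -/
theorem X5_hyperelliptic_model {k : Type*} [Field k] [CharZero k] (a : k)
    (A f05 : k[X])
    (hA : A = C a * (X - 1) ^ 2 - C (5 : k) * X + C (3 : k))
    (hf : f05 = - X ^ 3 + C ((a ^ 2 - 8) / 4) * X ^ 2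
      - C ((a ^ 2 + 5 * a + 6) / 2) * X + C ((a + 3) ^ 2 / 4)) :
    C ((4 : k)⁻¹) * A ^ 2 - X ^ 5 = (X - 1) ^ 2 * f05 := by
  have c1 : C (4:k) * C ((a ^ 2 - 8) / 4) = C (a ^ 2 - 8) := by
    rw [← C_mul]; congr 1; field_simp
  have c2 : C (4:k) * C ((a ^ 2 + 5 * a + 6) / 2) = C (2 * (a ^ 2 + 5 * a + 6)) := by
    rw [← C_mul]; congr 1; field_simp; ring
  have c3 : C (4:k) * C ((a + 3) ^ 2 / 4) = C ((a + 3) ^ 2) := by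
    rw [← C_mul]; congr 1; field_simp
  have hb : C (4:k) * C ((4:k)⁻¹) = 1 := by
    rw [← C_mul]; norm_num
  have key : C (4:k) * f05 = -(C (4:k) * X ^ 3) + C (a ^ 2 - 8) * X ^ 2
      - C (2 * (a ^ 2 + 5 * a + 6)) * X + C ((a + 3) ^ 2) := by
    rw [hf]
    rw [mul_add, mul_sub, mul_add, mul_neg, ← mul_assoc, ← mul_assoc, c1, c2, c3]
  apply mul_left_cancel₀ (a := C (4:k))
    (by simp only [ne_eq, C_eq_zero]; norm_num)
  rw [mul_sub, ← mul_assoc, hb, one_mul,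
    show C (4:k) * ((X - 1) ^ 2 * f05) = (X - 1) ^ 2 * (C (4:k) * f05) by ring,
    key, hA]
  simp only [map_mul, map_add, map_sub, map_pow, map_ofNat]
  ring
end

section
/- For n = 6 and parameters a_2, a_3 ∈ k, set A(t) = 4 − 6·t + a_2·(t−1)² + a_3·(t³ − 3t + 2) ∈ k[t] and f⁰_6(t) = (1/4)·(a_3−2)·(a_3+2)·t⁴ + (1/2)·(−4 + a_2·a_3 + a_3²)·t³ + (1/4)·(−12 + a_2² − 12·a_3 − 3·a_3²)·t² − (1/2)·(2 + a_2 + a_3)·(4 + a_2 + 2·a_3)·t + (1/4)·(4 + a_2 + 2·a_3)². Then A(t)²/4 − t⁶ = (t−1)²·f⁰_6(t) in k[t]. (Thus the quotient curve X_6 = C_6/⟨α⟩ has the affine hyperelliptic model u² = f⁰_6(t).) -/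
open Polynomial

/-- For n = 6: with A(t) = 4 - 6t + a₂(t-1)² + a₃(t³-3t+2) and the explicit quartic
f⁰₆(t), one has A(t)²/4 - t⁶ = (t-1)²·f⁰₆(t) in k[t]; thus X₆ = C₆/⟨α⟩ has affine model
u² = f⁰₆(t). -/
theorem X6_hyperelliptic_model {k : Type*} [Field k] [CharZero k] (a2 a3 : k)
    (A f06 : k[X])
    (hA : A = C (4 : k) - C (6 : k) * X + C a2 * (X - 1) ^ 2
      + C a3 * (X ^ 3 - 3 * X + 2))
    (hf : f06 = C ((a3 - 2) * (a3 + 2) / 4) * X ^ 4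
      + C ((-4 + a2 * a3 + a3 ^ 2) / 2) * X ^ 3
      + C ((-12 + a2 ^ 2 - 12 * a3 - 3 * a3 ^ 2) / 4) * X ^ 2
      - C ((2 + a2 + a3) * (4 + a2 + 2 * a3) / 2) * X
      + C ((4 + a2 + 2 * a3) ^ 2 / 4)) :
    C ((4 : k)⁻¹) * A ^ 2 - X ^ 6 = (X - 1) ^ 2 * f06 := by
  subst hA hf
  simp only [div_eq_mul_inv, map_mul, map_add, map_sub, map_neg, map_pow, map_ofNat, map_one]
  have h21 : C ((2:k)⁻¹) = 2 * C ((4:k)⁻¹) := by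
    rw [← map_ofNat (C : k →+* k[X]) 2, ← map_mul]; congr 1; norm_num
  have hy : (4 : k[X]) * C ((4:k)⁻¹) = 1 := by
    rw [← map_ofNat (C : k →+* k[X]) 4, ← map_mul]; norm_num
  rw [h21]
  linear_combination (X : k[X]) ^ 6 * hy
end

section
/- For n = 7 and parameters a_2, a_3 ∈ k, set A(t) = 5 − 7·t + a_2·(t−1)² + a_3·(t³ − 3t + 2) ∈ k[t] and f⁰_7(t) = −t⁵ + (1/4)·(−8 + a_3²)·t⁴ + (1/2)·(−6 + a_2·a_3 + a_3²)·t³ + (1/4)·(−16 + a_2² − 14·a_3 − 3·a_3²)·t² − (1/2)·(2 + a_2 + a_3)·(5 + a_2 + 2·a_3)·t + (1/4)·(5 + a_2 + 2·a_3)². Then A(t)²/4 − t⁷ = (t−1)²·f⁰_7(t) in k[t]. (Thus the quotient curve X_7 = C_7/⟨α⟩ has the affine hyperelliptic model u² = f⁰_7(t).) -/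
open Polynomial

/-- For n = 7: with A(t) = 5 - 7t + a₂(t-1)² + a₃(t³-3t+2) and the explicit quintic
f⁰₇(t), one has A(t)²/4 - t⁷ = (t-1)²·f⁰₇(t) in k[t]; thus X₇ = C₇/⟨α⟩ has affine model
u² = f⁰₇(t). -/
theorem X7_hyperelliptic_model {k : Type*} [Field k] [CharZero k] (a2 a3 : k)
    (A f07 : k[X])
    (hA : A = C (5 : k) - C (7 : k) * X + C a2 * (X - 1) ^ 2
      + C a3 * (X ^ 3 - 3 * X + 2))
    (hf : f07 = - X ^ 5 + C ((-8 + a3 ^ 2) / 4) * X ^ 4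
      + C ((-6 + a2 * a3 + a3 ^ 2) / 2) * X ^ 3
      + C ((-16 + a2 ^ 2 - 14 * a3 - 3 * a3 ^ 2) / 4) * X ^ 2
      - C ((2 + a2 + a3) * (5 + a2 + 2 * a3) / 2) * X
      + C ((5 + a2 + 2 * a3) ^ 2 / 4)) :
    C ((4 : k)⁻¹) * A ^ 2 - X ^ 7 = (X - 1) ^ 2 * f07 := by
  subst hA hf
  have h1 : C ((4:k)) * C ((4:k)⁻¹) = 1 := by
    rw [← map_mul, mul_inv_cancel₀ (by norm_num : (4:k) ≠ 0), map_one]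
  have h2inv : ((2:k))⁻¹ = 2 * (4:k)⁻¹ := by norm_num
  simp only [div_eq_mul_inv, h2inv, map_mul, map_add, map_sub, map_neg, map_pow,
    map_ofNat, map_one] at h1 ⊢
  linear_combination (X^7 - (X-1)^2*X^5) * h1
end
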